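/- arXiv:1302.7074 — 2 statements merged into one kernel-verified Lean document; each statement's English description precedes it below -/
import Mathlib

section
/- Let D be a d×n complex matrix (a dictionary) and A an m×d complex matrix. Then A satisfies the D-null space property of order k if and only if the ℓ¹-synthesis method succeeds on all signals with k-sparse representations in D; that is, if and only if for every k-sparse vector z₀ ∈ ℂⁿ, every minimizer ẑ of ‖z‖₁ over the set {z ∈ ℂⁿ : ADz = ADz₀} satisfies Dẑ = Dz₀. -/
/-!
If `ẑ` minimizes `‖z‖₁` on `{z : ADz = ADz₀}` with `z₀` supported on `T` but `Dẑ ≠ Dz₀`, apply the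
`D`-NSP to `v = ẑ - z₀` to get `u ∈ ker D`; then `z₀ - u` is feasible and the triangle inequality
gives `‖z₀ - u‖₁ ≤ ‖ẑ_T‖₁ + ‖v_T + u‖₁ < ‖ẑ_T‖₁ + ‖ẑ_{T^c}‖₁ = ‖ẑ‖₁`, a contradiction.

Conversely, given `T` and `v` with `ADv = 0`, `Dv ≠ 0`, recover the `T`-sparse vector `z₀ = v_T`:
a minimizer `ẑ` exists since `‖·‖₁` is coercive, and `u = ẑ - z₀ ∈ ker D` by assumption, so
`v_T + u = ẑ`. The feasible point `z₀ - v = -v_{T^c}` gives `‖ẑ‖₁ ≤ ‖v_{T^c}‖₁`; equality would make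
`-v_{T^c}` a minimizer too, forcing `D(z₀ - v) = Dz₀`, i.e. `Dv = 0`.
-/

open Finset Matrix

/-- The ℓ¹ norm of a vector: the sum of the absolute values of its entries. -/
noncomputable def l1norm {n : Type*} [Fintype n] (v : n → ℂ) : ℝ :=
  ∑ i, ‖v i‖

/-- The ℓ² (Euclidean) norm of a vector. -/
noncomputable def l2norm {n : Type*} [Fintype n] (v : n → ℂ) : ℝ :=
  Real.sqrt (∑ i, ‖v i‖ ^ 2)

/-- `restrict v T` agrees with `v` on the index set `T` and is zero elsewhere. -/
def restrict {n : Type*} [Fintype n] [DecidableEq n] (v : n → ℂ) (T : Finset n) : n → ℂ :=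
  fun i => if i ∈ T then v i else 0

/-- A vector is `k`-sparse if it has at most `k` nonzero entries. -/
def KSparse {n : Type*} [Fintype n] [DecidableEq n] (k : ℕ) (z : n → ℂ) : Prop :=
  ∃ T : Finset n, T.card ≤ k ∧ ∀ i ∉ T, z i = 0

/-- `A` satisfies the `D`-null space property of order `k` (`k`-`D`-NSP):
for every index set `T` with `|T| ≤ k` and every `v` with `Dv ∈ ker A` and `Dv ≠ 0`,
there exists `u ∈ ker D` such that `‖v_T + u‖₁ < ‖v_{T^c}‖₁`. -/
def DNSP {m d n : Type*} [Fintype m] [Fintype d] [Fintype n] [DecidableEq n]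
    (A : Matrix m d ℂ) (D : Matrix d n ℂ) (k : ℕ) : Prop :=
  ∀ T : Finset n, T.card ≤ k → ∀ v : n → ℂ,
    A.mulVec (D.mulVec v) = 0 → D.mulVec v ≠ 0 →
    ∃ u : n → ℂ, D.mulVec u = 0 ∧ l1norm (restrict v T + u) < l1norm (restrict v Tᶜ)

/-- `M` satisfies the null space property of order `k` (`k`-NSP):
for every nonzero `v ∈ ker M` and every index set `T` with `|T| ≤ k`,
`‖v_T‖₁ < ‖v_{T^c}‖₁`. -/
def NSP {m n : Type*} [Fintype m] [Fintype n] [DecidableEq n]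
    (M : Matrix m n ℂ) (k : ℕ) : Prop :=
  ∀ v : n → ℂ, M.mulVec v = 0 → v ≠ 0 → ∀ T : Finset n, T.card ≤ k →
    l1norm (restrict v T) < l1norm (restrict v Tᶜ)

/-- `A` satisfies the strong `D`-null space property of order `k` with constant `c`
(`k`-`D`-SNSP): for every index set `T` with `|T| ≤ k` and every `v ∈ ker (AD)`,
there exists `u ∈ ker D` such that `‖v_{T^c}‖₁ − ‖v_T + u‖₁ ≥ c‖Dv‖₂`. -/
def DSNSP {m d n : Type*} [Fintype m] [Fintype d] [Fintype n] [DecidableEq n]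
    (A : Matrix m d ℂ) (D : Matrix d n ℂ) (k : ℕ) (c : ℝ) : Prop :=
  ∀ T : Finset n, T.card ≤ k → ∀ v : n → ℂ, (A * D).mulVec v = 0 →
    ∃ u : n → ℂ, D.mulVec u = 0 ∧
      c * l2norm (D.mulVec v) ≤ l1norm (restrict v Tᶜ) - l1norm (restrict v T + u)

/-- A `d × n` matrix is full spark if every `d` of its columns are linearly independent. -/
def FullSpark {d n : ℕ} (D : Matrix (Fin d) (Fin n) ℂ) : Prop :=
  ∀ S : Finset (Fin n), S.card = d →
    LinearIndependent ℂ (fun j : S => Dᵀ (j : Fin n))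

open Filter

section L1Norm

variable {n : Type*} [Fintype n]

lemma l1norm_neg (v : n → ℂ) : l1norm (-v) = l1norm v := by
  simp [l1norm]

lemma l1norm_add_le (v w : n → ℂ) : l1norm (v + w) ≤ l1norm v + l1norm w := by
  rw [l1norm, l1norm, l1norm, ← Finset.sum_add_distrib]
  exact Finset.sum_le_sum fun i _ => norm_add_le _ _

lemma norm_le_l1norm (v : n → ℂ) : ‖v‖ ≤ l1norm v :=
  (pi_norm_le_iff_of_nonneg (Finset.sum_nonneg fun _ _ => norm_nonneg _)).2 fun i =>
    Finset.single_le_sum (f := fun j => ‖v j‖) (fun _ _ => norm_nonneg _) (Finset.mem_univ i)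

lemma continuous_l1norm : Continuous (l1norm : (n → ℂ) → ℝ) :=
  continuous_finsetSum _ fun i _ => continuous_norm.comp (continuous_apply i)

lemma exists_isMinOn_l1norm {s : Set (n → ℂ)} (hs : IsClosed s) (hne : s.Nonempty) :
    ∃ z ∈ s, IsMinOn l1norm s z := by
  obtain ⟨z₀, hz₀⟩ := hne
  have hcoercive : Tendsto (l1norm : (n → ℂ) → ℝ) (cocompact _) atTop :=
    tendsto_atTop_mono norm_le_l1norm tendsto_norm_cocompact_atTop
  exact continuous_l1norm.continuousOn.exists_isMinOn' hs hz₀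
    ((hcoercive.eventually_ge_atTop _).filter_mono inf_le_left)

variable [DecidableEq n]

lemma restrict_add_restrict_compl (v : n → ℂ) (T : Finset n) :
    restrict v T + restrict v Tᶜ = v := by
  funext i
  by_cases h : i ∈ T <;> simp [_root_.restrict, h]

lemma l1norm_add_eq_of_vanishing_off {z : n → ℂ} {T : Finset n} (hz : ∀ i ∉ T, z i = 0)
    (v : n → ℂ) : l1norm (z + v) = l1norm (z + restrict v T) + l1norm (restrict v Tᶜ) := by
  rw [l1norm, l1norm, l1norm, ← Finset.sum_add_distrib]
  refine Finset.sum_congr rfl fun i _ => ?_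
  by_cases h : i ∈ T <;> simp [_root_.restrict, h, hz]

end L1Norm

section Synthesis

variable {m d n : Type*} [Fintype m] [Fintype d] [Fintype n] [DecidableEq n]

def L1SynthesisRecovers (A : Matrix m d ℂ) (D : Matrix d n ℂ) (k : ℕ) : Prop :=
  ∀ z₀ : n → ℂ, KSparse k z₀ → ∀ zhat : n → ℂ, (A * D) *ᵥ zhat = (A * D) *ᵥ z₀ →
    (∀ z, (A * D) *ᵥ z = (A * D) *ᵥ z₀ → l1norm zhat ≤ l1norm z) → D *ᵥ zhat = D *ᵥ z₀

variable {A : Matrix m d ℂ} {D : Matrix d n ℂ} {k : ℕ}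

theorem DNSP.l1SynthesisRecovers (hA : DNSP A D k) : L1SynthesisRecovers A D k := by
  rintro z₀ ⟨T, hT, hz₀T⟩ zhat hfeas hmin
  by_contra hne
  set v := zhat - z₀
  have hADv : A *ᵥ (D *ᵥ v) = 0 := by
    rw [mulVec_mulVec, mulVec_sub, hfeas, sub_self]
  have hDv : D *ᵥ v ≠ 0 := by rwa [mulVec_sub, sub_ne_zero]
  obtain ⟨u, hDu, hlt⟩ := hA T hT v hADv hDv
  have hsplit : l1norm zhat = l1norm (z₀ + restrict v T) + l1norm (restrict v Tᶜ) := by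
    rw [← l1norm_add_eq_of_vanishing_off hz₀T, add_sub_cancel]
  have hADu : (A * D) *ᵥ u = 0 := by rw [← mulVec_mulVec, hDu, mulVec_zero]
  have hfeas_u : (A * D) *ᵥ (z₀ - u) = (A * D) *ᵥ z₀ := by rw [mulVec_sub, hADu, sub_zero]
  have htri : l1norm (z₀ - u) ≤ l1norm (z₀ + restrict v T) + l1norm (restrict v T + u) :=
    calc l1norm (z₀ - u) = l1norm ((z₀ + restrict v T) + -(restrict v T + u)) := by
          congr 1; abel
      _ ≤ _ := (l1norm_add_le _ _).trans_eq (by rw [l1norm_neg])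
  linarith [hmin _ hfeas_u]

theorem L1SynthesisRecovers.dnsp (hrec : L1SynthesisRecovers A D k) : DNSP A D k := by
  intro T hT v hADv hDv
  set z₀ := restrict v T
  set S := {z : n → ℂ | (A * D) *ᵥ z = (A * D) *ᵥ z₀}
  have hz₀ : KSparse k z₀ := ⟨T, hT, fun i hi => if_neg hi⟩
  have hS : IsClosed S :=
    isClosed_eq (continuous_const.matrix_mulVec continuous_id) continuous_const
  obtain ⟨zhat, hfeas, hmin⟩ := exists_isMinOn_l1norm hS ⟨z₀, rfl⟩
  rw [isMinOn_iff] at hmin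
  have hDz := hrec z₀ hz₀ zhat hfeas hmin
  refine ⟨zhat - z₀, by rw [mulVec_sub, hDz, sub_self], ?_⟩
  rw [add_sub_cancel]
  have hw : z₀ - v = -restrict v Tᶜ := by
    rw [eq_neg_iff_add_eq_zero, sub_add_eq_add_sub, restrict_add_restrict_compl, sub_self]
  have hfeas_w : z₀ - v ∈ S := by
    show (A * D) *ᵥ (z₀ - v) = (A * D) *ᵥ z₀
    rw [mulVec_sub, ← mulVec_mulVec v, hADv, sub_zero]
  have hle : l1norm zhat ≤ l1norm (restrict v Tᶜ) := by
    simpa [hw, l1norm_neg] using hmin _ hfeas_w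
  refine hle.lt_of_ne fun heq => hDv ?_
  have hmin_w : ∀ z ∈ S, l1norm (z₀ - v) ≤ l1norm z := by
    rw [hw, l1norm_neg, ← heq]; exact hmin
  simpa [mulVec_sub] using hrec z₀ hz₀ _ hfeas_w hmin_w

end Synthesis

/-- Theorem 1 (paper): `A` satisfies `k`-`D`-NSP iff the ℓ¹-synthesis method succeeds
on all signals with `k`-sparse representations in `D`: for every `k`-sparse `z₀`,
every minimizer `ẑ` of `‖z‖₁` over `{z : ADz = ADz₀}` satisfies `Dẑ = Dz₀`. -/
theorem stmt_0 {m d n : ℕ} (A : Matrix (Fin m) (Fin d) ℂ) (D : Matrix (Fin d) (Fin n) ℂ)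
    (k : ℕ) :
    DNSP A D k ↔
      ∀ z₀ : Fin n → ℂ, KSparse k z₀ →
        ∀ zhat : Fin n → ℂ,
          (A * D).mulVec zhat = (A * D).mulVec z₀ →
          (∀ z : Fin n → ℂ, (A * D).mulVec z = (A * D).mulVec z₀ → l1norm zhat ≤ l1norm z) →
          D.mulVec zhat = D.mulVec z₀ :=
  ⟨DNSP.l1SynthesisRecovers, L1SynthesisRecovers.dnsp⟩
end

section
/- Let D ∈ ℂ^{d×n} be a dictionary, let I ⊆ {1,…,n} be any index set, and let D̃ = [D, D_I] ∈ ℂ^{d×(n+|I|)} be the matrix obtained by appending to D the columns of D indexed by I. Then for any matrix A ∈ ℂ^{m×d} and any k, A satisfies the D-null space property of order k if and only if A satisfies the D̃-null space property of order k. -/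
open Finset Matrix

/-!
Every column of `D̃ = [D, D_I]` is a column of `D`: `D̃ = D.submatrix id σ` for a surjective `σ`,
so `D̃ x = D (P x)`, where `P x` sums the coefficients of `x` over the fibres of `σ`. The map `P`
does not increase `ℓ¹` norms and sends vectors supported on `T` to vectors supported on `σ(T)`,
a set of at most `|T|` indices; extension by zero along a section of `σ` is an `ℓ¹`-isometric
right inverse of `P` commuting with restriction. So a test vector for `D̃` is pushed forward to
one for `D` and the kernel correction for `D` is pulled back to one for `D̃`, and conversely.
-/

open Function

section L1

variable {ι : Type*} [Fintype ι]

lemma l1norm_sub_le (x y : ι → ℂ) : l1norm (x - y) ≤ l1norm x + l1norm y := by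
  rw [l1norm, l1norm, l1norm, ← sum_add_distrib]
  exact sum_le_sum fun i _ => norm_sub_le _ _

variable [DecidableEq ι]

lemma restrict_add (x y : ι → ℂ) (S : Finset ι) :
    restrict (x + y) S = restrict x S + restrict y S := by
  funext i
  by_cases hi : i ∈ S <;> simp [_root_.restrict, hi]

lemma restrict_add_restrict_compl_s2 (x : ι → ℂ) (S : Finset ι) :
    restrict x S + restrict x Sᶜ = x := by
  funext i
  by_cases hi : i ∈ S <;> simp [_root_.restrict, hi]

lemma l1norm_restrict_add_l1norm_restrict_compl (x : ι → ℂ) (S : Finset ι) :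
    l1norm (restrict x S) + l1norm (restrict x Sᶜ) = l1norm x := by
  rw [l1norm, l1norm, l1norm, ← sum_add_distrib]
  refine sum_congr rfl fun i _ => ?_
  by_cases hi : i ∈ S <;> simp [_root_.restrict, hi]

lemma restrict_eq_self {x : ι → ℂ} {S : Finset ι} (hx : ∀ i ∉ S, x i = 0) :
    restrict x S = x := by
  funext i
  by_cases hi : i ∈ S <;> simp [_root_.restrict, hi, hx]

lemma restrict_compl_eq_zero {x : ι → ℂ} {S : Finset ι} (hx : ∀ i ∉ S, x i = 0) :
    restrict x Sᶜ = 0 := by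
  funext i
  by_cases hi : i ∈ S <;> simp [_root_.restrict, hi, hx]

end L1

section FiberSum

variable {ι ι' M : Type*} [Fintype ι'] [DecidableEq ι] [AddCommMonoid M]

def fiberSum (σ : ι' → ι) (x : ι' → M) : ι → M :=
  fun i => ∑ j with σ j = i, x j

variable (σ : ι' → ι)

lemma fiberSum_add (x y : ι' → M) :
    fiberSum σ (x + y) = fiberSum σ x + fiberSum σ y := by
  funext i
  simp [fiberSum, sum_add_distrib]

lemma fiberSum_sub {G : Type*} [AddCommGroup G] (x y : ι' → G) :
    fiberSum σ (x - y) = fiberSum σ x - fiberSum σ y := by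
  funext i
  simp [fiberSum, sum_sub_distrib]

lemma fiberSum_extend {s : ι → ι'} (hs : LeftInverse σ s) (x : ι → M) :
    fiberSum σ (extend s x 0) = x := by
  funext i
  refine (sum_eq_single_of_mem (s i) (by simp [hs i]) fun j hj hji => ?_).trans
    (hs.injective.extend_apply x 0 i)
  refine extend_apply' _ _ _ fun ⟨a, ha⟩ => hji ?_
  rw [← ha, ← (mem_filter.mp hj).2, ← ha, hs a]

lemma fiberSum_restrict_apply_of_notMem [Fintype ι] [DecidableEq ι'] (x : ι' → ℂ)
    {T : Finset ι'} {i : ι} (hi : i ∉ T.image σ) : fiberSum σ (restrict x T) i = 0 := by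
  refine sum_eq_zero fun j hj => ?_
  have hjT : j ∉ T := fun hjT => hi (mem_image.mpr ⟨j, hjT, (mem_filter.mp hj).2⟩)
  simp [_root_.restrict, hjT]

lemma l1norm_fiberSum_le [Fintype ι] (x : ι' → ℂ) : l1norm (fiberSum σ x) ≤ l1norm x := by
  calc l1norm (fiberSum σ x)
      ≤ ∑ i, ∑ j with σ j = i, ‖x j‖ := sum_le_sum fun i _ => norm_sum_le _ _
    _ = l1norm x := sum_fiberwise _ _ _

lemma submatrix_mulVec_eq_mulVec_fiberSum [Fintype ι] {d : Type*} (D : Matrix d ι ℂ)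
    (x : ι' → ℂ) : D.submatrix id σ *ᵥ x = D *ᵥ fiberSum σ x := by
  funext r
  simp only [mulVec, dotProduct, fiberSum, mul_sum, submatrix_apply, id]
  rw [← sum_fiberwise univ σ fun j => D r (σ j) * x j]
  exact sum_congr rfl fun i _ => sum_congr rfl fun j hj => by rw [(mem_filter.mp hj).2]

end FiberSum

section Extend

variable {ι ι' : Type*} [Fintype ι] [Fintype ι'] [DecidableEq ι] {σ : ι' → ι} {s : ι → ι'}

lemma l1norm_extend (hs : LeftInverse σ s) (x : ι → ℂ) : l1norm (extend s x 0) = l1norm x := by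
  calc l1norm (extend s x 0)
      = ∑ i, fiberSum σ (fun j => ‖extend s x 0 j‖) i := (sum_fiberwise _ _ _).symm
    _ = l1norm x := by
      simp only [apply_extend norm, comp_def, Pi.zero_apply, norm_zero]
      rw [← Pi.zero_def, fiberSum_extend σ hs]
      rfl

variable [DecidableEq ι']

lemma restrict_extend_map (hs : LeftInverse σ s) (x : ι → ℂ) (T : Finset ι) :
    restrict (extend s x 0) (T.map ⟨s, hs.injective⟩) = extend s (restrict x T) 0 := by
  funext j
  by_cases hj : ∃ a, s a = j
  · obtain ⟨a, rfl⟩ := hj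
    simp [_root_.restrict, hs.injective.extend_apply]
  · have hjT : j ∉ T.map ⟨s, hs.injective⟩ := by simpa using fun a _ => fun h => hj ⟨a, h⟩
    simp [_root_.restrict, hjT, extend_apply' _ _ _ hj]

lemma restrict_extend_map_compl (hs : LeftInverse σ s) (x : ι → ℂ) (T : Finset ι) :
    restrict (extend s x 0) (T.map ⟨s, hs.injective⟩)ᶜ = extend s (restrict x Tᶜ) 0 := by
  funext j
  by_cases hj : ∃ a, s a = j
  · obtain ⟨a, rfl⟩ := hj
    simp [_root_.restrict, hs.injective.extend_apply]
  · have hjT : j ∈ (T.map ⟨s, hs.injective⟩)ᶜ := by simpa using fun a _ => fun h => hj ⟨a, h⟩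
    simp [_root_.restrict, hjT, extend_apply' _ _ _ hj]

end Extend

section DNSP

variable {m d ι ι' : Type*} [Fintype m] [Fintype d] [Fintype ι] [Fintype ι'] [DecidableEq ι]
  [DecidableEq ι'] {A : Matrix m d ℂ} {D : Matrix d ι ℂ} {k : ℕ} {σ : ι' → ι}

theorem DNSP.submatrix (h : DNSP A D k) (hσ : Surjective σ) : DNSP A (D.submatrix id σ) k := by
  obtain ⟨s, hs⟩ : ∃ s, LeftInverse σ s := hσ.hasRightInverse
  intro T hT v hAv hv
  rw [submatrix_mulVec_eq_mulVec_fiberSum] at hAv hv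
  set S := T.image σ
  set a := fiberSum σ (restrict v T)
  set b := fiberSum σ (restrict v Tᶜ)
  have ha : ∀ i ∉ S, a i = 0 := fun i hi => fiberSum_restrict_apply_of_notMem σ v hi
  have hab : fiberSum σ v = a + b := by rw [← fiberSum_add, restrict_add_restrict_compl_s2]
  have hS : restrict (fiberSum σ v) S = a + restrict b S := by
    rw [hab, restrict_add, restrict_eq_self ha]
  have hSc : restrict (fiberSum σ v) Sᶜ = restrict b Sᶜ := by
    rw [hab, restrict_add, restrict_compl_eq_zero ha, zero_add]
  obtain ⟨u, hDu, hu⟩ := h S (card_image_le.trans hT) (fiberSum σ v) hAv hv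
  -- the witness makes `v_T + u'` the zero extension of `a + u`, while its fibre sum is `u`
  refine ⟨extend s (a + u) 0 - restrict v T, ?_, ?_⟩
  · rw [submatrix_mulVec_eq_mulVec_fiberSum, fiberSum_sub, fiberSum_extend σ hs,
      add_sub_cancel_left, hDu]
  calc l1norm (restrict v T + (extend s (a + u) 0 - restrict v T))
      = l1norm (a + u) := by rw [add_sub_cancel, l1norm_extend hs]
    _ = l1norm ((restrict (fiberSum σ v) S + u) - restrict b S) := by rw [hS]; abel_nf
    _ ≤ l1norm (restrict (fiberSum σ v) S + u) + l1norm (restrict b S) := l1norm_sub_le _ _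
    _ < l1norm (restrict b Sᶜ) + l1norm (restrict b S) := by rw [← hSc]; linarith
    _ = l1norm b := by rw [add_comm, l1norm_restrict_add_l1norm_restrict_compl]
    _ ≤ l1norm (restrict v Tᶜ) := l1norm_fiberSum_le σ _

theorem DNSP.of_submatrix (h : DNSP A (D.submatrix id σ) k) (hσ : Surjective σ) :
    DNSP A D k := by
  obtain ⟨s, hs⟩ : ∃ s, LeftInverse σ s := hσ.hasRightInverse
  intro T hT v hAv hv
  have hDv : D.submatrix id σ *ᵥ extend s v 0 = D *ᵥ v := by
    rw [submatrix_mulVec_eq_mulVec_fiberSum, fiberSum_extend σ hs]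
  set T' := T.map ⟨s, hs.injective⟩
  obtain ⟨u, hDu, hu⟩ :=
    h T' ((card_map _).trans_le hT) (extend s v 0) (hDv ▸ hAv) (hDv ▸ hv)
  refine ⟨fiberSum σ u, by rwa [← submatrix_mulVec_eq_mulVec_fiberSum], ?_⟩
  calc l1norm (restrict v T + fiberSum σ u)
      = l1norm (fiberSum σ (restrict (extend s v 0) T' + u)) := by
        rw [fiberSum_add, restrict_extend_map hs, fiberSum_extend σ hs]
    _ ≤ l1norm (restrict (extend s v 0) T' + u) := l1norm_fiberSum_le σ _
    _ < l1norm (restrict (extend s v 0) T'ᶜ) := hu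
    _ = l1norm (restrict v Tᶜ) := by rw [restrict_extend_map_compl hs, l1norm_extend hs]

theorem dnsp_iff_dnsp_submatrix (hσ : Surjective σ) :
    DNSP A D k ↔ DNSP A (D.submatrix id σ) k :=
  ⟨fun h => h.submatrix hσ, fun h => h.of_submatrix hσ⟩

end DNSP

/-- Proposition 1 (paper): appending to `D` a copy of the columns indexed by `I` does not
change the `D`-null space property: `A` is `k`-`D`-NSP iff `A` is `k`-`D̃`-NSP, where
`D̃ = [D, D_I]`. -/
theorem stmt_2 {m d n : ℕ} (A : Matrix (Fin m) (Fin d) ℂ) (D : Matrix (Fin d) (Fin n) ℂ)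
    (I : Finset (Fin n)) (k : ℕ)
    (Dtil : Matrix (Fin d) (Fin n ⊕ {j // j ∈ I}) ℂ)
    (hDtil : Dtil = Matrix.of fun i => Sum.elim (D i) (fun j : {j // j ∈ I} => D i (j : Fin n))) :
    DNSP A D k ↔ DNSP A Dtil k := by
  have hDtil' : Dtil = D.submatrix id (Sum.elim id Subtype.val) := by
    rw [hDtil]
    ext i (j | j) <;> rfl
  rw [hDtil']
  exact dnsp_iff_dnsp_submatrix fun i => ⟨Sum.inl i, rfl⟩
end
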